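/- Let {C₁, C₂, C₃} be an unextendible family of three pairwise disjoint maximal commuting Pauli classes in dimension d = 4. Then the nine operators of C₁ ∪ C₂ ∪ C₃ can be partitioned into three pairwise disjoint maximal commuting Pauli classes C₁′, C₂′, C₃′, each of which contains, up to phase, exactly one member from each of C₁, C₂, and C₃. -/

import Mathlib

open Matrix

noncomputable section

/-- Matrices on the Hilbert space of `n` qubits, with rows and columns indexed by
bit strings `Fin n → Fin 2`. -/
abbrev QMat (n : ℕ) := Matrix (Fin n → Fin 2) (Fin n → Fin 2) ℂ

/-- The single-qubit identity. -/
def pI : Matrix (Fin 2) (Fin 2) ℂ := 1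

/-- The single-qubit Pauli X. -/
def pX : Matrix (Fin 2) (Fin 2) ℂ := !![0, 1; 1, 0]

/-- The single-qubit Pauli Y. -/
def pY : Matrix (Fin 2) (Fin 2) ℂ := !![0, -Complex.I; Complex.I, 0]

/-- The single-qubit Pauli Z. -/
def pZ : Matrix (Fin 2) (Fin 2) ℂ := !![1, 0; 0, -1]

/-- The `n`-fold Kronecker product `W 0 ⊗ ⋯ ⊗ W (n-1)`, realized on indices
`Fin n → Fin 2`. -/
def kron (n : ℕ) (W : Fin n → Matrix (Fin 2) (Fin 2) ℂ) : QMat n :=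
  fun v w => ∏ j, W j (v j) (w j)

/-- `M` is an `n`-qubit Pauli operator: an `n`-fold Kronecker product of matrices
from `{I₂, X, Y, Z}`. -/
def IsPauliOp (n : ℕ) (M : QMat n) : Prop :=
  ∃ W : Fin n → Matrix (Fin 2) (Fin 2) ℂ,
    (∀ j, W j = pI ∨ W j = pX ∨ W j = pY ∨ W j = pZ) ∧ M = kron n W

/-- Two matrices are equal up to phase if one is a nonzero scalar multiple of the other. -/
def PhaseEq {m : Type*} (A B : Matrix m m ℂ) : Prop := ∃ c : ℂ, c ≠ 0 ∧ A = c • B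

/-- A maximal commuting Pauli class in dimension `d = 2 ^ n`: a set of `d - 1`
pairwise commuting non-identity `n`-qubit Pauli operators, pairwise distinct up to phase. -/
def IsMaxClass (n : ℕ) (C : Set (QMat n)) : Prop :=
  C.Finite ∧ C.ncard = 2 ^ n - 1 ∧
  (∀ U ∈ C, IsPauliOp n U ∧ U ≠ 1) ∧
  (∀ U ∈ C, ∀ V ∈ C, U * V = V * U) ∧
  (∀ U ∈ C, ∀ V ∈ C, U ≠ V → ¬ PhaseEq U V)

/-- Two classes are disjoint if no member of one is equal up to phase to a member of the other. -/
def ClassDisjoint {n : ℕ} (C D : Set (QMat n)) : Prop :=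
  ∀ U ∈ C, ∀ V ∈ D, ¬ PhaseEq U V

/-- Two classes are equal up to phase (as sets of operators). -/
def ClassPhaseEq {n : ℕ} (C D : Set (QMat n)) : Prop :=
  (∀ U ∈ C, ∃ V ∈ D, PhaseEq U V) ∧ (∀ V ∈ D, ∃ U ∈ C, PhaseEq U V)

/-- The standard Hermitian inner product on `ι → ℂ` (conjugate-linear in the first slot). -/
def cinner {ι : Type*} [Fintype ι] (x y : ι → ℂ) : ℂ :=
  ∑ k, (starRingEnd ℂ) (x k) * y k

/-!
Label an `n`-qubit Pauli operator by its symplectic vector in `(𝔽₂ × 𝔽₂)ⁿ`, one pair `(x, z)` per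
qubit for `X^x Z^z` up to phase. Two Pauli operators are equal up to phase iff their labels agree
(a trace computation), and they commute iff the symplectic form of their labels vanishes. For two
qubits the maximal commuting classes are therefore the fifteen isotropic lines `{a, b, a + b}` of
the symplectic quadrangle `W(3, 2)`, and the classes of an unextendible triple are three pairwise
disjoint lines that together meet every line. Such a triple has three pairwise disjoint common
transversals (a finite check). Each transversal meets each old line in exactly one point, since two
lines share at most one point, and by counting the transversals cover the same nine points.
-/

open Function

variable {n : ℕ}

theorem Finset.subset_biUnion_of_card_inter_eq_one {ι α : Type*} [Fintype ι] [DecidableEq α]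
    {L : ι → Finset α} (hL : Pairwise (Disjoint on L)) {M : Finset α}
    (hM : ∀ i, (M ∩ L i).card = 1) (hcard : M.card = Fintype.card ι) :
    M ⊆ Finset.univ.biUnion L := by
  have hdisj : ((Finset.univ : Finset ι) : Set ι).PairwiseDisjoint fun i => M ∩ L i :=
    fun i _ j _ hij => (hL hij).mono Finset.inter_subset_right Finset.inter_subset_right
  have h : (M ∩ Finset.univ.biUnion L).card = M.card := by
    rw [Finset.inter_biUnion, Finset.card_biUnion hdisj, hcard]
    simp [hM]
  exact Finset.inter_eq_left.mp (Finset.eq_of_subset_of_card_le Finset.inter_subset_left h.ge)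

theorem kron_mul (W W' : Fin n → Matrix (Fin 2) (Fin 2) ℂ) :
    kron n W * kron n W' = kron n fun j => W j * W' j := by
  funext v w
  simp only [kron, Matrix.mul_apply, ← Finset.prod_mul_distrib, Finset.prod_univ_sum,
    Fintype.piFinset_univ]

theorem kron_smul (c : Fin n → ℂ) (W : Fin n → Matrix (Fin 2) (Fin 2) ℂ) :
    kron n (fun j => c j • W j) = (∏ j, c j) • kron n W := by
  funext v w
  simp [kron, Finset.prod_mul_distrib]

theorem kron_one : kron n (fun _ => 1) = 1 := by
  funext v w
  by_cases h : v = w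
  · subst h
    simp [kron]
  · obtain ⟨j, hj⟩ := Function.ne_iff.mp h
    simp only [kron, Matrix.one_apply, if_neg h]
    exact Finset.prod_eq_zero (Finset.mem_univ j) (by simp [hj])

theorem trace_kron (W : Fin n → Matrix (Fin 2) (Fin 2) ℂ) :
    (kron n W).trace = ∏ j, (W j).trace := by
  simp only [Matrix.trace, Matrix.diag, kron, Finset.prod_univ_sum, Fintype.piFinset_univ]

/-- The single-qubit Pauli matrix `X^x Z^z` (up to phase) with symplectic label `u = (x, z)`. -/
def pauli (u : ZMod 2 × ZMod 2) : Matrix (Fin 2) (Fin 2) ℂ := ![![pI, pZ], ![pX, pY]] u.1 u.2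

@[simp] theorem pauli_I : pauli (0, 0) = pI := rfl
@[simp] theorem pauli_X : pauli (1, 0) = pX := rfl
@[simp] theorem pauli_Y : pauli (1, 1) = pY := rfl
@[simp] theorem pauli_Z : pauli (0, 1) = pZ := rfl

theorem zmod_two_prod_cases :
    ∀ u : ZMod 2 × ZMod 2, u = (0, 0) ∨ u = (1, 0) ∨ u = (1, 1) ∨ u = (0, 1) := by
  decide

def sympLetter (u v : ZMod 2 × ZMod 2) : ZMod 2 := u.1 * v.2 + u.2 * v.1

theorem pauli_mul (u v : ZMod 2 × ZMod 2) :
    ∃ c : ℂ, c ≠ 0 ∧ pauli u * pauli v = c • pauli (u + v) := by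
  rcases zmod_two_prod_cases u with rfl | rfl | rfl | rfl <;>
    rcases zmod_two_prod_cases v with rfl | rfl | rfl | rfl <;>
    simp only [Prod.mk_add_mk, CharTwo.add_self_eq_zero, add_zero, zero_add, pauli_I, pauli_X,
      pauli_Y, pauli_Z, pI, pX, pY, pZ] <;>
    first
      | refine ⟨1, one_ne_zero, ?_⟩
        ext i j; fin_cases i <;> fin_cases j <;> simp; done
      | refine ⟨Complex.I, Complex.I_ne_zero, ?_⟩
        ext i j; fin_cases i <;> fin_cases j <;> simp; done
      | refine ⟨-Complex.I, by simp, ?_⟩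
        ext i j; fin_cases i <;> fin_cases j <;> simp

theorem pauli_mul_comm (u v : ZMod 2 × ZMod 2) :
    pauli v * pauli u = (-1 : ℂ) ^ (sympLetter u v).val • (pauli u * pauli v) := by
  rcases zmod_two_prod_cases u with rfl | rfl | rfl | rfl <;>
    rcases zmod_two_prod_cases v with rfl | rfl | rfl | rfl <;>
    simp [sympLetter, pI, pX, pY, pZ, Matrix.one_fin_two, ZMod.val_one,
      CharTwo.add_self_eq_zero]

theorem trace_pauli {u : ZMod 2 × ZMod 2} (hu : u ≠ 0) : (pauli u).trace = 0 := by
  rcases zmod_two_prod_cases u with rfl | rfl | rfl | rfl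
  · exact absurd rfl hu
  all_goals simp [pX, pY, pZ, Matrix.trace_fin_two]

theorem exists_pauli_eq {W : Matrix (Fin 2) (Fin 2) ℂ} :
    (W = pI ∨ W = pX ∨ W = pY ∨ W = pZ) ↔ ∃ u, pauli u = W := by
  constructor
  · rintro (rfl | rfl | rfl | rfl)
    exacts [⟨(0, 0), rfl⟩, ⟨(1, 0), rfl⟩, ⟨(1, 1), rfl⟩, ⟨(0, 1), rfl⟩]
  · rintro ⟨u, rfl⟩
    rcases zmod_two_prod_cases u with rfl | rfl | rfl | rfl <;> simp

abbrev PauliLabel (n : ℕ) := Fin n → ZMod 2 × ZMod 2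

def pauliOp (a : PauliLabel n) : QMat n := kron n fun j => pauli (a j)

def symp (a b : PauliLabel n) : ZMod 2 := ∑ j, sympLetter (a j) (b j)

theorem pauliOp_zero : pauliOp (0 : PauliLabel n) = 1 := kron_one

theorem pauliOp_mul (a b : PauliLabel n) :
    ∃ c : ℂ, c ≠ 0 ∧ pauliOp a * pauliOp b = c • pauliOp (a + b) := by
  choose c hc hmul using fun j => pauli_mul (a j) (b j)
  refine ⟨∏ j, c j, Finset.prod_ne_zero_iff.mpr fun j _ => hc j, ?_⟩
  rw [pauliOp, pauliOp, kron_mul, funext hmul, kron_smul]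
  rfl

theorem pauliOp_mul_self (a : PauliLabel n) : ∃ c : ℂ, c ≠ 0 ∧ pauliOp a * pauliOp a = c • 1 := by
  simpa only [ZModModule.add_self, pauliOp_zero] using pauliOp_mul a a

theorem pauliOp_ne_zero (a : PauliLabel n) : pauliOp a ≠ 0 := by
  obtain ⟨c, hc, h⟩ := pauliOp_mul_self a
  intro h0
  rw [h0, zero_mul, eq_comm, smul_eq_zero] at h
  exact h.elim hc one_ne_zero

theorem trace_pauliOp {a : PauliLabel n} (ha : a ≠ 0) : (pauliOp a).trace = 0 := by
  obtain ⟨j, hj⟩ := Function.ne_iff.mp ha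
  exact (trace_kron _).trans (Finset.prod_eq_zero (Finset.mem_univ j) (trace_pauli hj))

theorem phaseEq_pauliOp_iff {a b : PauliLabel n} : PhaseEq (pauliOp a) (pauliOp b) ↔ a = b := by
  refine ⟨fun ⟨c, hc, h⟩ => ?_, fun h => ⟨1, one_ne_zero, by rw [h, one_smul]⟩⟩
  by_contra hab
  obtain ⟨c₁, -, h₁⟩ := pauliOp_mul a b
  obtain ⟨c₂, hc₂, h₂⟩ := pauliOp_mul_self b
  have hsum : a + b ≠ 0 := by rwa [Ne, ← ZModModule.sub_eq_add, sub_eq_zero]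
  -- the trace of `pauliOp a * pauliOp b` is `0` by `h₁`, but `c c₂ 2ⁿ` by `h`
  have htr := congrArg Matrix.trace (h₁.symm.trans (by rw [h, smul_mul_assoc, h₂]))
  simp [trace_pauliOp hsum, hc, hc₂] at htr

theorem pauliOp_injective : Injective (pauliOp (n := n)) := fun _ _ h =>
  phaseEq_pauliOp_iff.mp ⟨1, one_ne_zero, by rw [h, one_smul]⟩

theorem pauliOp_eq_one_iff {a : PauliLabel n} : pauliOp a = 1 ↔ a = 0 := by
  rw [← pauliOp_zero, pauliOp_injective.eq_iff]

theorem isPauliOp_iff {M : QMat n} : IsPauliOp n M ↔ ∃ a, pauliOp a = M := by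
  simp only [IsPauliOp, exists_pauli_eq]
  constructor
  · rintro ⟨W, hW, rfl⟩
    choose a ha using hW
    exact ⟨a, by simp only [pauliOp, ha]⟩
  · rintro ⟨a, rfl⟩
    exact ⟨_, fun j => ⟨a j, rfl⟩, rfl⟩

theorem pauliOp_mul_comm (a b : PauliLabel n) :
    pauliOp b * pauliOp a =
      (-1 : ℂ) ^ (∑ j, (sympLetter (a j) (b j)).val) • (pauliOp a * pauliOp b) := by
  simp only [pauliOp, kron_mul]
  rw [funext fun j => pauli_mul_comm (a j) (b j), kron_smul, Finset.prod_pow_eq_pow_sum]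

theorem commute_pauliOp_iff {a b : PauliLabel n} :
    Commute (pauliOp a) (pauliOp b) ↔ symp a b = 0 := by
  obtain ⟨c, hc, hab⟩ := pauliOp_mul a b
  have hne : pauliOp a * pauliOp b ≠ 0 := by
    rw [hab]; exact smul_ne_zero hc (pauliOp_ne_zero _)
  calc Commute (pauliOp a) (pauliOp b)
      ↔ (-1 : ℂ) ^ (∑ j, (sympLetter (a j) (b j)).val) • (pauliOp a * pauliOp b) =
          (1 : ℂ) • (pauliOp a * pauliOp b) := by
        rw [one_smul, ← pauliOp_mul_comm, eq_comm]; rfl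
    _ ↔ Even (∑ j, (sympLetter (a j) (b j)).val) := by
        rw [(smul_left_injective ℂ hne).eq_iff, neg_one_pow_eq_one_iff_even (by norm_num)]
    _ ↔ symp a b = 0 := by
        rw [← ZMod.natCast_eq_zero_iff_even]
        push_cast [ZMod.natCast_val, ZMod.cast_id', id]
        rfl

def IsMaxLabelClass (n : ℕ) (s : Finset (PauliLabel n)) : Prop :=
  s.card = 2 ^ n - 1 ∧ 0 ∉ s ∧ ∀ a ∈ s, ∀ b ∈ s, symp a b = 0

theorem isMaxClass_image_iff {s : Finset (PauliLabel n)} :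
    IsMaxClass n (pauliOp '' s) ↔ IsMaxLabelClass n s := by
  have hcard : (pauliOp '' (s : Set (PauliLabel n))).ncard = s.card := by
    rw [Set.ncard_image_of_injective _ pauliOp_injective, Set.ncard_coe_finset]
  have hne_one : (∀ U ∈ pauliOp '' (s : Set (PauliLabel n)), IsPauliOp n U ∧ U ≠ 1) ↔ 0 ∉ s := by
    simp [isPauliOp_iff, pauliOp_eq_one_iff]
  have hcomm : (∀ U ∈ pauliOp '' (s : Set (PauliLabel n)), ∀ V ∈ pauliOp '' s, U * V = V * U) ↔
      ∀ a ∈ s, ∀ b ∈ s, symp a b = 0 := by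
    simp only [Set.forall_mem_image, Finset.mem_coe, ← commute_pauliOp_iff]
    rfl
  have hphase : ∀ U ∈ pauliOp '' (s : Set (PauliLabel n)), ∀ V ∈ pauliOp '' s,
      U ≠ V → ¬ PhaseEq U V := by
    rintro _ ⟨a, -, rfl⟩ _ ⟨b, -, rfl⟩ hab h
    exact hab (congrArg pauliOp (phaseEq_pauliOp_iff.mp h))
  simp only [IsMaxClass, IsMaxLabelClass, hcard, hne_one, hcomm,
    iff_true_intro (s.finite_toSet.image _), iff_true_intro hphase, true_and, and_true]

theorem IsMaxClass.exists_isMaxLabelClass {C : Set (QMat n)} (h : IsMaxClass n C) :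
    ∃ s, IsMaxLabelClass n s ∧ C = pauliOp '' s := by
  have hsub : C ⊆ Set.range pauliOp := fun U hU => isPauliOp_iff.mp (h.2.2.1 U hU).1
  have hC : C = pauliOp '' ↑(h.1.preimage pauliOp_injective.injOn).toFinset := by
    rw [Set.Finite.coe_toFinset, Set.image_preimage_eq_of_subset hsub]
  exact ⟨_, isMaxClass_image_iff.mp (hC ▸ h), hC⟩

theorem exists_mem_image_phaseEq_iff {a : PauliLabel n} {A : Set (PauliLabel n)} :
    (∃ V ∈ pauliOp '' A, PhaseEq (pauliOp a) V) ↔ a ∈ A := by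
  simp [phaseEq_pauliOp_iff]

theorem exists_mem_image_phaseEq_iff' {a : PauliLabel n} {A : Set (PauliLabel n)} :
    (∃ U ∈ pauliOp '' A, PhaseEq U (pauliOp a)) ↔ a ∈ A := by
  simp [phaseEq_pauliOp_iff]

theorem classDisjoint_image_iff {A B : Set (PauliLabel n)} :
    ClassDisjoint (pauliOp '' A) (pauliOp '' B) ↔ Disjoint A B := by
  simp only [ClassDisjoint, Set.forall_mem_image, phaseEq_pauliOp_iff, Set.disjoint_left]
  exact ⟨fun h a ha hb => h ha hb rfl, fun h a ha b hb hab => h ha (hab ▸ hb)⟩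

/-- Generators `(a, b)` of the fifteen isotropic lines `{a, b, a + b}` of the two-qubit symplectic
space; `![u, v]` labels `pauli u ⊗ pauli v`, and `(1, 0)`, `(1, 1)`, `(0, 1)` stand for `X`, `Y`,
`Z`. -/
def lineGen : Fin 15 → PauliLabel 2 × PauliLabel 2 :=
  ![(![0, (1, 0)], ![(1, 0), 0]), (![0, (1, 0)], ![(1, 1), 0]), (![0, (1, 0)], ![(0, 1), 0]),
    (![0, (1, 1)], ![(1, 0), 0]), (![0, (1, 1)], ![(1, 1), 0]), (![0, (1, 1)], ![(0, 1), 0]),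
    (![0, (0, 1)], ![(1, 0), 0]), (![0, (0, 1)], ![(1, 1), 0]), (![0, (0, 1)], ![(0, 1), 0]),
    (![(1, 0), (1, 0)], ![(1, 1), (1, 1)]), (![(1, 0), (1, 0)], ![(1, 1), (0, 1)]),
    (![(1, 0), (1, 1)], ![(1, 1), (1, 0)]), (![(1, 0), (1, 1)], ![(1, 1), (0, 1)]),
    (![(1, 0), (0, 1)], ![(1, 1), (1, 0)]), (![(1, 0), (0, 1)], ![(1, 1), (1, 1)])]

def pauliLine (i : Fin 15) : Finset (PauliLabel 2) :=
  {(lineGen i).1, (lineGen i).2, (lineGen i).1 + (lineGen i).2}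

set_option synthInstance.maxSize 10000 in
theorem isMaxLabelClass_pauliLine : ∀ i, IsMaxLabelClass 2 (pauliLine i) := by
  unfold IsMaxLabelClass; decide +kernel

set_option synthInstance.maxSize 10000 in
theorem exists_pauliLine_mem : ∀ a b c : PauliLabel 2, a ≠ 0 → b ≠ 0 → a ≠ b → symp a b = 0 →
    c ≠ 0 → a ≠ c → b ≠ c → symp a c = 0 → symp b c = 0 →
    ∃ i, a ∈ pauliLine i ∧ b ∈ pauliLine i ∧ c ∈ pauliLine i := by
  decide +kernel

theorem card_inter_pauliLine_le_one :
    ∀ i j, i ≠ j → (pauliLine i ∩ pauliLine j).card ≤ 1 := by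
  decide +kernel

set_option synthInstance.maxSize 10000 in
theorem exists_three_disjoint_transversals : ∀ i₀ i₁ i₂, Disjoint (pauliLine i₀) (pauliLine i₁) →
    Disjoint (pauliLine i₀) (pauliLine i₂) → Disjoint (pauliLine i₁) (pauliLine i₂) →
    (∀ j, ¬ Disjoint (pauliLine j) (pauliLine i₀) ∨ ¬ Disjoint (pauliLine j) (pauliLine i₁) ∨
      ¬ Disjoint (pauliLine j) (pauliLine i₂)) →
    ∃ j₀, (¬ Disjoint (pauliLine j₀) (pauliLine i₀) ∧ ¬ Disjoint (pauliLine j₀) (pauliLine i₁) ∧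
      ¬ Disjoint (pauliLine j₀) (pauliLine i₂)) ∧
    ∃ j₁, (¬ Disjoint (pauliLine j₁) (pauliLine i₀) ∧ ¬ Disjoint (pauliLine j₁) (pauliLine i₁) ∧
      ¬ Disjoint (pauliLine j₁) (pauliLine i₂)) ∧ Disjoint (pauliLine j₀) (pauliLine j₁) ∧
    ∃ j₂, (¬ Disjoint (pauliLine j₂) (pauliLine i₀) ∧ ¬ Disjoint (pauliLine j₂) (pauliLine i₁) ∧
      ¬ Disjoint (pauliLine j₂) (pauliLine i₂)) ∧ Disjoint (pauliLine j₀) (pauliLine j₂) ∧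
      Disjoint (pauliLine j₁) (pauliLine j₂) := by
  decide +kernel

theorem IsMaxLabelClass.exists_eq_pauliLine {s : Finset (PauliLabel 2)}
    (h : IsMaxLabelClass 2 s) : ∃ i, s = pauliLine i := by
  obtain ⟨hcard, h0, hsymp⟩ := h
  obtain ⟨a, b, c, hab, hac, hbc, rfl⟩ := Finset.card_eq_three.mp hcard
  simp only [Finset.mem_insert, Finset.mem_singleton, not_or] at h0 hsymp
  obtain ⟨ha, hb, hc⟩ := h0
  obtain ⟨i, hai, hbi, hci⟩ := exists_pauliLine_mem a b c (Ne.symm ha) (Ne.symm hb) hab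
    (hsymp a (by simp) b (by simp)) (Ne.symm hc) hac hbc (hsymp a (by simp) c (by simp))
    (hsymp b (by simp) c (by simp))
  refine ⟨i, Finset.eq_of_subset_of_card_le ?_ ?_⟩
  · simp [Finset.insert_subset_iff, hai, hbi, hci]
  · rw [(isMaxLabelClass_pauliLine i).1, hcard]

theorem IsMaxClass.exists_eq_image_pauliLine {C : Set (QMat 2)} (h : IsMaxClass 2 C) :
    ∃ i, C = pauliOp '' pauliLine i := by
  obtain ⟨s, hs, rfl⟩ := h.exists_isMaxLabelClass
  obtain ⟨i, rfl⟩ := hs.exists_eq_pauliLine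
  exact ⟨i, rfl⟩

theorem not_disjoint_pauliLine_of_unextendible {S : Set (PauliLabel 2)}
    (h : ¬ ∃ R : Set (QMat 2), IsMaxClass 2 R ∧ ∀ U ∈ R, ∀ V ∈ pauliOp '' S, ¬ PhaseEq U V)
    (l : Fin 15) : ¬ Disjoint ↑(pauliLine l) S := fun hl =>
  h ⟨_, isMaxClass_image_iff.mpr (isMaxLabelClass_pauliLine l), classDisjoint_image_iff.mpr hl⟩

theorem card_inter_pauliLine_eq_one {i j : Fin 15} (hij : i ≠ j)
    (h : ¬ Disjoint (pauliLine i) (pauliLine j)) : (pauliLine i ∩ pauliLine j).card = 1 :=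
  le_antisymm (card_inter_pauliLine_le_one i j hij)
    (Finset.card_pos.mpr (Finset.not_disjoint_iff_nonempty_inter.mp h))

theorem exists_transversal_pauliLines (i : Fin 3 → Fin 15)
    (hdisj : Pairwise (Disjoint on fun k => pauliLine (i k)))
    (hunext : ∀ l, ¬ Disjoint (pauliLine l) (Finset.univ.biUnion fun k => pauliLine (i k))) :
    ∃ j : Fin 3 → Fin 15, Pairwise (Disjoint on fun k => pauliLine (j k)) ∧
      ∀ k l, ¬ Disjoint (pauliLine (j k)) (pauliLine (i l)) := by
  have hunext' : ∀ l, ¬ Disjoint (pauliLine l) (pauliLine (i 0)) ∨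
      ¬ Disjoint (pauliLine l) (pauliLine (i 1)) ∨ ¬ Disjoint (pauliLine l) (pauliLine (i 2)) := by
    intro l
    by_contra! h
    refine hunext l ((Finset.disjoint_biUnion_right _ _ _).mpr fun k _ => ?_)
    fin_cases k
    exacts [h.1, h.2.1, h.2.2]
  obtain ⟨j₀, h₀, j₁, h₁, h₀₁, j₂, h₂, h₀₂, h₁₂⟩ :=
    exists_three_disjoint_transversals (i 0) (i 1) (i 2)
      (hdisj (by decide)) (hdisj (by decide)) (hdisj (by decide)) hunext'
  refine ⟨![j₀, j₁, j₂], ?_, ?_⟩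
  · intro k l hkl
    fin_cases k <;> fin_cases l <;> first | exact absurd rfl hkl | simp_all [onFun, disjoint_comm]
  · intro k l
    fin_cases k <;> fin_cases l <;> simp_all

theorem exists_repartition_pauliLines (i : Fin 3 → Fin 15)
    (hdisj : Pairwise (Disjoint on fun k => pauliLine (i k)))
    (hunext : ∀ l, ¬ Disjoint (pauliLine l) (Finset.univ.biUnion fun k => pauliLine (i k))) :
    ∃ j : Fin 3 → Fin 15, Pairwise (Disjoint on fun k => pauliLine (j k)) ∧
      (∀ k l, (pauliLine (j k) ∩ pauliLine (i l)).card = 1) ∧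
      Finset.univ.biUnion (fun k => pauliLine (j k)) =
        Finset.univ.biUnion (fun k => pauliLine (i k)) := by
  obtain ⟨j, hjdisj, hmeet⟩ := exists_transversal_pauliLines i hdisj hunext
  -- `j k = i l` is impossible: `pauliLine (j k)` also meets `pauliLine (i l')` for `l' ≠ l`
  have hne : ∀ k l, j k ≠ i l := by
    intro k l h
    obtain ⟨l', hl'⟩ : ∃ l', l' ≠ l := ⟨l + 1, by simp⟩
    exact hmeet k l' (h ▸ hdisj hl'.symm)
  have hcard : ∀ k l, (pauliLine (j k) ∩ pauliLine (i l)).card = 1 := fun k l =>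
    card_inter_pauliLine_eq_one (hne k l) (hmeet k l)
  have hthree : ∀ m, (pauliLine m).card = Fintype.card (Fin 3) := fun m =>
    (isMaxLabelClass_pauliLine m).1
  refine ⟨j, hjdisj, hcard, subset_antisymm ?_ ?_⟩
  · exact Finset.biUnion_subset.mpr fun k _ =>
      Finset.subset_biUnion_of_card_inter_eq_one hdisj (hcard k) (hthree _)
  · exact Finset.biUnion_subset.mpr fun l _ =>
      Finset.subset_biUnion_of_card_inter_eq_one hjdisj
        (fun k => by rw [Finset.inter_comm, hcard]) (hthree _)

theorem existsUnique_mem_image_phaseEq_of_pairwise_disjoint {ι : Type*}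
    {s : ι → Finset (PauliLabel n)} (hs : Pairwise (Disjoint on s)) {a : PauliLabel n} {i : ι}
    (ha : a ∈ s i) :
    ∃! k, ∃ V ∈ pauliOp '' s k, PhaseEq (pauliOp a) V := by
  simp only [exists_mem_image_phaseEq_iff, Finset.mem_coe]
  exact ⟨i, ha, fun k hk => by_contra fun hki => Finset.disjoint_left.mp (hs hki) hk ha⟩

theorem existsUnique_phaseEq_of_card_inter_eq_one {s t : Finset (PauliLabel n)}
    (h : (s ∩ t).card = 1) :
    ∃! V, V ∈ pauliOp '' (s : Set (PauliLabel n)) ∧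
      ∃ U ∈ pauliOp '' (t : Set (PauliLabel n)), PhaseEq V U := by
  obtain ⟨b, hb⟩ := Finset.card_eq_one.mp h
  have hmem : ∀ a, a ∈ s ∧ a ∈ t ↔ a = b := fun a => by
    rw [← Finset.mem_inter, hb, Finset.mem_singleton]
  refine ⟨pauliOp b, ⟨Set.mem_image_of_mem _ ((hmem b).mpr rfl).1, ?_⟩, ?_⟩
  · exact exists_mem_image_phaseEq_iff.mpr ((hmem b).mpr rfl).2
  · rintro _ ⟨⟨a, ha, rfl⟩, hphase⟩
    rw [(hmem a).mp ⟨ha, exists_mem_image_phaseEq_iff.mp hphase⟩]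

/-- The nine operators of an unextendible family of three pairwise disjoint
maximal commuting Pauli classes in `d = 4` admit a second partition into three pairwise
disjoint maximal commuting Pauli classes, each containing (up to phase) exactly one member
from each of the original classes. -/
theorem repartition_unextendible_triple_d4 (C : Fin 3 → Set (QMat 2))
    (hmax : ∀ i, IsMaxClass 2 (C i))
    (hdisj : ∀ i j, i ≠ j → ClassDisjoint (C i) (C j))
    (hunext : ¬ ∃ R : Set (QMat 2), IsMaxClass 2 R ∧
        ∀ U ∈ R, ∀ V ∈ C 0 ∪ C 1 ∪ C 2, ¬ PhaseEq U V) :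
    ∃ C' : Fin 3 → Set (QMat 2),
      (∀ k, IsMaxClass 2 (C' k)) ∧
      (∀ k l, k ≠ l → ClassDisjoint (C' k) (C' l)) ∧
      (∀ U ∈ C 0 ∪ C 1 ∪ C 2, ∃! k : Fin 3, ∃ V ∈ C' k, PhaseEq U V) ∧
      (∀ k, ∀ V ∈ C' k, ∃ U ∈ C 0 ∪ C 1 ∪ C 2, PhaseEq U V) ∧
      (∀ k j : Fin 3, ∃! V, V ∈ C' k ∧ ∃ U ∈ C j, PhaseEq V U) := by
  choose i hi using fun k => (hmax k).exists_eq_image_pauliLine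
  obtain rfl : C = fun k => pauliOp '' pauliLine (i k) := funext hi
  have hS : pauliOp '' pauliLine (i 0) ∪ pauliOp '' pauliLine (i 1) ∪ pauliOp '' pauliLine (i 2) =
      pauliOp '' (↑(Finset.univ.biUnion fun k => pauliLine (i k)) : Set (PauliLabel 2)) := by
    ext U
    simp [Fin.exists_fin_succ, or_and_right, exists_or, or_assoc]
  rw [hS] at hunext ⊢
  obtain ⟨j, hjdisj, hcard, hunion⟩ := exists_repartition_pauliLines i
    (fun k l hkl => by exact_mod_cast classDisjoint_image_iff.mp (hdisj k l hkl))
    (fun l => by exact_mod_cast not_disjoint_pauliLine_of_unextendible hunext l)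
  refine ⟨fun k => pauliOp '' pauliLine (j k),
    fun k => isMaxClass_image_iff.mpr (isMaxLabelClass_pauliLine (j k)),
    fun k l hkl => classDisjoint_image_iff.mpr (by exact_mod_cast hjdisj hkl), ?_, ?_,
    fun k l => existsUnique_phaseEq_of_card_inter_eq_one (hcard k l)⟩
  · rintro _ ⟨a, ha, rfl⟩
    rw [Finset.mem_coe, ← hunion, Finset.mem_biUnion] at ha
    obtain ⟨k, -, hk⟩ := ha
    exact existsUnique_mem_image_phaseEq_of_pairwise_disjoint hjdisj hk
  · rintro k _ ⟨b, hb, rfl⟩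
    rw [exists_mem_image_phaseEq_iff', Finset.mem_coe, ← hunion, Finset.mem_biUnion]
    exact ⟨k, Finset.mem_univ k, hb⟩
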